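/- Let d ≥ 1 and let δ, K, M, c₁ > 0. Let p, σ ∈ L¹(ℝ^d) with ∫|p| ≤ K and ∫|σ| ≤ M, and suppose |(p*σ)(x)| + |σ(x)| ≤ c₁ for almost every x with |x| ≥ δ. Then for every integer n ≥ 1 there exists a constant c_n = c_n(n, c₁, K, M) such that |(p*σ^{*n})(x)| ≤ c_n for almost every x with |x| ≥ nδ. -/

import Mathlib

open MeasureTheory

/-- Convolution of two functions on `ℝ^d` (Bochner integral). -/
noncomputable def convolve {d : ℕ} (f g : EuclideanSpace ℝ (Fin d) → ℝ) :
    EuclideanSpace ℝ (Fin d) → ℝ := fun x => ∫ y, f (x - y) * g y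

/-- `convPowFun σ n = σ^{*(n+1)}`, the `(n+1)`-fold convolution power of `σ`
(so `convPowFun σ 0 = σ^{*1} = σ`). -/
noncomputable def convPowFun {d : ℕ} (σ : EuclideanSpace ℝ (Fin d) → ℝ) :
    ℕ → EuclideanSpace ℝ (Fin d) → ℝ
  | 0 => σ
  | n + 1 => convolve (convPowFun σ n) σ

/-!
If `|f| ≤ A` a.e. outside the ball of radius `a` and `|g| ≤ B` a.e. outside the ball of
radius `b`, then for `‖x‖ ≥ a + b` each point `y` has `‖y‖ ≥ b` or `‖x - y‖ > a`, so
`|f (x - y) g y| ≤ A |g y| + B |f (x - y)|` and `|(f * g) x| ≤ A ‖g‖₁ + B ‖f‖₁`.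
Since `p * σ^{*(n+1)} = (p * σ^{*n}) * σ` a.e., induction on `n` pushes the bound on
`p * σ` out to radius `(n + 1) δ`.
-/

open scoped Convolution

variable {d : ℕ}

section Convolve

variable {f g k : EuclideanSpace ℝ (Fin d) → ℝ}

lemma convolve_eq_convolution (f g : EuclideanSpace ℝ (Fin d) → ℝ) :
    convolve f g = g ⋆[ContinuousLinearMap.mul ℝ ℝ] f := by
  funext x
  simp only [convolve, convolution_def, ContinuousLinearMap.mul_apply']
  exact integral_congr_ae (.of_forall fun y => mul_comm _ _)

lemma MeasureTheory.Integrable.convolve (hf : Integrable f) (hg : Integrable g) :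
    Integrable (convolve f g) := by
  rw [convolve_eq_convolution]
  exact hg.integrable_convolution _ hf

lemma convolve_assoc_ae (hf : Integrable f) (hg : Integrable g) (hk : Integrable k) :
    convolve f (convolve g k) =ᵐ[volume] convolve (convolve f g) k := by
  simp only [convolve_eq_convolution]
  let L := ContinuousLinearMap.mul ℝ ℝ
  filter_upwards [hk.norm.ae_convolution_exists L (hg.norm.integrable_convolution L hf.norm)]
    with x hx
  exact convolution_assoc L L L L (fun x y z => mul_assoc x y z) hk.aestronglyMeasurable
    hg.aestronglyMeasurable hf.aestronglyMeasurable (hk.ae_convolution_exists L hg)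
    (hg.norm.ae_convolution_exists L hf.norm) hx

lemma MeasureTheory.Integrable.convPowFun (hg : Integrable g) (n : ℕ) : Integrable (convPowFun g n) := by
  induction n with
  | zero => exact hg
  | succ n ih => exact ih.convolve hg

lemma abs_convolve_le_of_ae_abs_le (hf : Integrable f) (hg : Integrable g)
    {a b A B : ℝ} (hA : 0 ≤ A) (hB : 0 ≤ B)
    (hfA : ∀ᵐ y, a ≤ ‖y‖ → |f y| ≤ A) (hgB : ∀ᵐ y, b ≤ ‖y‖ → |g y| ≤ B)
    {x : EuclideanSpace ℝ (Fin d)} (hx : a + b ≤ ‖x‖) :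
    |convolve f g x| ≤ A * (∫ y, |g y|) + B * ∫ y, |f y| := by
  have hfA_x : ∀ᵐ y, a ≤ ‖x - y‖ → |f (x - y)| ≤ A :=
    (Measure.measurePreserving_sub_left volume x).quasiMeasurePreserving.ae hfA
  have hdom : Integrable (fun y => A * |g y| + B * |f (x - y)|) :=
    (hg.abs.const_mul A).add ((hf.comp_sub_left x).abs.const_mul B)
  have hbound : ∀ᵐ y, ‖f (x - y) * g y‖ ≤ A * |g y| + B * |f (x - y)| := by
    filter_upwards [hfA_x, hgB] with y hfy hgy
    rw [Real.norm_eq_abs, abs_mul]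
    rcases le_or_gt b ‖y‖ with hy | hy
    · have := mul_le_mul_of_nonneg_left (hgy hy) (abs_nonneg (f (x - y)))
      nlinarith [abs_nonneg (g y)]
    · have hxy : a ≤ ‖x - y‖ := by linarith [norm_sub_norm_le x y]
      have := mul_le_mul_of_nonneg_right (hfy hxy) (abs_nonneg (g y))
      nlinarith [abs_nonneg (f (x - y))]
  calc |convolve f g x| = ‖∫ y, f (x - y) * g y‖ := (Real.norm_eq_abs _).symm
    _ ≤ ∫ y, (A * |g y| + B * |f (x - y)|) := norm_integral_le_of_norm_le hdom hbound
    _ = A * (∫ y, |g y|) + B * ∫ y, |f y| := by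
      rw [integral_add (hg.abs.const_mul A) ((hf.comp_sub_left x).abs.const_mul B),
        integral_const_mul, integral_const_mul,
        integral_sub_left_eq_self (fun t => |f t|) volume x]

end Convolve

theorem convolution_power_bound (d : ℕ)
    (δ c₁ : ℝ) (hc₁ : 0 < c₁)
    (p σ : EuclideanSpace ℝ (Fin d) → ℝ)
    (hp : Integrable p) (hσ : Integrable σ)
    (h1 : ∀ᵐ x : EuclideanSpace ℝ (Fin d),
      δ ≤ ‖x‖ → |convolve p σ x| + |σ x| ≤ c₁) :
    ∀ n : ℕ, ∃ cn : ℝ,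
      ∀ᵐ x : EuclideanSpace ℝ (Fin d),
        ((n : ℝ) + 1) * δ ≤ ‖x‖ → |convolve p (convPowFun σ n) x| ≤ cn := by
  have hσ_tail : ∀ᵐ y : EuclideanSpace ℝ (Fin d), δ ≤ ‖y‖ → |σ y| ≤ c₁ :=
    h1.mono fun y hy hδy => (le_add_of_nonneg_left (abs_nonneg _)).trans (hy hδy)
  intro n
  induction n with
  | zero =>
    refine ⟨c₁, h1.mono fun x hx hδx => ?_⟩
    exact (le_add_of_nonneg_right (abs_nonneg _)).trans (hx (by simpa using hδx))
  | succ n ih =>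
    obtain ⟨c, hc⟩ := ih
    have hc_abs := hc.mono fun x hx hnx => (hx hnx).trans (le_abs_self c)
    refine ⟨|c| * (∫ y, |σ y|) + c₁ * ∫ y, |convolve p (convPowFun σ n) y|, ?_⟩
    filter_upwards [convolve_assoc_ae hp (hσ.convPowFun n) hσ] with x hx hnx
    rw [convPowFun, hx]
    exact abs_convolve_le_of_ae_abs_le (hp.convolve (hσ.convPowFun n)) hσ (abs_nonneg c)
      hc₁.le hc_abs hσ_tail (by push_cast at hnx; linarith)
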